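/- arXiv:1410.3106 — 3 statements merged into one kernel-verified Lean document; each statement's English description precedes it below -/
import Mathlib

section
/- Let ρ : ℝ → ℝ be smooth, compactly supported, and equal to 1 on a neighborhood of 0. For w = a + ib ∈ ℂ define φ_w : ℝ² → ℝ² by φ_w(x,y) = (x + aρ(r), y + bρ(r)) with r = √(x²+y²), let Dφ_w be its Jacobian matrix, set (A B; B C) = ᵗ(Dφ_w)(Dφ_w) and J_w = AC − B², and for a smooth compactly supported u : ℝ² → ℝ define q_w(u) = ∫_{ℝ²} [C(∂ₓu)² − 2B(∂ₓu)(∂_yu) + A(∂_yu)²] J_w^{−1/2} dx dy and n_w(u) = ∫_{ℝ²} u² J_w^{1/2} dx dy. Then for every λ ∈ ℂ the function (a,b) ↦ −q_w(u) + λ n_w(u) is differentiable at w = 0 and its Wirtinger derivatives at 0 are: ½(∂_a − i∂_b)[−q_w(u) + λ n_w(u)]|_{w=0} = 2∫_{ℝ²} (∂_z u)² (z ρ'(r)/r) dx dy + (λ/2)∫_{ℝ²} u² (z̄ ρ'(r)/r) dx dy, and ½(∂_a + i∂_b)[−q_w(u) + λ n_w(u)]|_{w=0} = 2∫_{ℝ²}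 (∂_{z̄} u)² (z̄ ρ'(r)/r) dx dy + (λ/2)∫_{ℝ²} u² (z ρ'(r)/r) dx dy. -/
open MeasureTheory

noncomputable section

/-- `ρ'(r)/r` at the point `p = (x,y)`, with `r = √(x²+y²)`, understood as `0` at the
origin (where `ρ'` vanishes anyway, `ρ` being constant near `0`). -/
def radialFactor (ρ : ℝ → ℝ) (p : ℝ × ℝ) : ℝ :=
  if p = 0 then 0
  else deriv ρ (Real.sqrt (p.1 ^ 2 + p.2 ^ 2)) / Real.sqrt (p.1 ^ 2 + p.2 ^ 2)

/-- Entry `A` of `ᵗ(Dφ_w)(Dφ_w)`, where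
`Dφ_w = (1 + a x ρ'(r)/r , a y ρ'(r)/r ; b x ρ'(r)/r , 1 + b y ρ'(r)/r)` and `w = (a,b)`. -/
def entA (ρ : ℝ → ℝ) (w p : ℝ × ℝ) : ℝ :=
  (1 + w.1 * p.1 * radialFactor ρ p) ^ 2 + (w.2 * p.1 * radialFactor ρ p) ^ 2

/-- Entry `B` of `ᵗ(Dφ_w)(Dφ_w)`. -/
def entB (ρ : ℝ → ℝ) (w p : ℝ × ℝ) : ℝ :=
  (1 + w.1 * p.1 * radialFactor ρ p) * (w.1 * p.2 * radialFactor ρ p) +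
    (w.2 * p.1 * radialFactor ρ p) * (1 + w.2 * p.2 * radialFactor ρ p)

/-- Entry `C` of `ᵗ(Dφ_w)(Dφ_w)`. -/
def entC (ρ : ℝ → ℝ) (w p : ℝ × ℝ) : ℝ :=
  (w.1 * p.2 * radialFactor ρ p) ^ 2 + (1 + w.2 * p.2 * radialFactor ρ p) ^ 2

/-- The Jacobian determinant `J_w = AC − B²`. -/
def Jac (ρ : ℝ → ℝ) (w p : ℝ × ℝ) : ℝ :=
  entA ρ w p * entC ρ w p - entB ρ w p ^ 2

/-- `∂ₓ u`. -/
def dX (u : ℝ × ℝ → ℝ) (p : ℝ × ℝ) : ℝ := fderiv ℝ u p (1, 0)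

/-- `∂_y u`. -/
def dY (u : ℝ × ℝ → ℝ) (p : ℝ × ℝ) : ℝ := fderiv ℝ u p (0, 1)

/-- `∂_z u = ½(∂ₓu − i ∂_y u)`. -/
def dZ (u : ℝ × ℝ → ℝ) (p : ℝ × ℝ) : ℂ :=
  (1 / 2 : ℂ) * ((dX u p : ℂ) - Complex.I * (dY u p : ℂ))

/-- `∂_{z̄} u = ½(∂ₓu + i ∂_y u)`. -/
def dZbar (u : ℝ × ℝ → ℝ) (p : ℝ × ℝ) : ℂ :=
  (1 / 2 : ℂ) * ((dX u p : ℂ) + Complex.I * (dY u p : ℂ))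

/-- The Dirichlet energy form
`q_w(u) = ∫ [C (∂ₓu)² − 2B ∂ₓu ∂_yu + A (∂_yu)²] J_w^{−1/2} dx dy`. -/
def qForm (ρ : ℝ → ℝ) (u : ℝ × ℝ → ℝ) (w : ℝ × ℝ) : ℝ :=
  ∫ p : ℝ × ℝ,
    (entC ρ w p * dX u p ^ 2 - 2 * entB ρ w p * dX u p * dY u p +
      entA ρ w p * dY u p ^ 2) * (Jac ρ w p) ^ (-(1 : ℝ) / 2)

/-- The `L²` form `n_w(u) = ∫ u² J_w^{1/2} dx dy`. -/
def nForm (ρ : ℝ → ℝ) (u : ℝ × ℝ → ℝ) (w : ℝ × ℝ) : ℝ :=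
  ∫ p : ℝ × ℝ, u p ^ 2 * (Jac ρ w p) ^ ((1 : ℝ) / 2)

namespace Lem41

open Complex

/-- `x * η`. -/
def c1 (ρ : ℝ → ℝ) (p : ℝ × ℝ) : ℝ := p.1 * radialFactor ρ p
/-- `y * η`. -/
def c2 (ρ : ℝ → ℝ) (p : ℝ × ℝ) : ℝ := p.2 * radialFactor ρ p
/-- `D = det Dφ_w = 1 + a c1 + b c2`. -/
def Dd (ρ : ℝ → ℝ) (w p : ℝ × ℝ) : ℝ := 1 + w.1 * c1 ρ p + w.2 * c2 ρ p

def Qf (ρ : ℝ → ℝ) (u : ℝ × ℝ → ℝ) (w p : ℝ × ℝ) : ℝ :=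
  entC ρ w p * dX u p ^ 2 - 2 * entB ρ w p * dX u p * dY u p + entA ρ w p * dY u p ^ 2

def Qa (ρ : ℝ → ℝ) (u : ℝ × ℝ → ℝ) (w p : ℝ × ℝ) : ℝ :=
  2*w.1*(c2 ρ p)^2*(dX u p)^2 - 2*(c2 ρ p + 2*w.1*(c1 ρ p)*(c2 ρ p))*(dX u p)*(dY u p)
    + 2*(1+w.1*(c1 ρ p))*(c1 ρ p)*(dY u p)^2

def Qb (ρ : ℝ → ℝ) (u : ℝ × ℝ → ℝ) (w p : ℝ × ℝ) : ℝ :=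
  2*(1+w.2*(c2 ρ p))*(c2 ρ p)*(dX u p)^2 - 2*(c1 ρ p + 2*w.2*(c1 ρ p)*(c2 ρ p))*(dX u p)*(dY u p)
    + 2*w.2*(c1 ρ p)^2*(dY u p)^2

def GA (ρ : ℝ → ℝ) (u : ℝ × ℝ → ℝ) (w p : ℝ × ℝ) : ℝ :=
  (Qa ρ u w p * Dd ρ w p - Qf ρ u w p * c1 ρ p) / (Dd ρ w p)^2

def GB (ρ : ℝ → ℝ) (u : ℝ × ℝ → ℝ) (w p : ℝ × ℝ) : ℝ :=
  (Qb ρ u w p * Dd ρ w p - Qf ρ u w p * c2 ρ p) / (Dd ρ w p)^2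

/-- the smoothed integrand -/
def Fc (ρ : ℝ → ℝ) (u : ℝ × ℝ → ℝ) (lam : ℂ) (w p : ℝ × ℝ) : ℂ :=
  -((Qf ρ u w p / Dd ρ w p : ℝ) : ℂ) + lam * ((u p ^ 2 * Dd ρ w p : ℝ) : ℂ)

def pj1 : ℝ × ℝ →L[ℝ] ℝ := ContinuousLinearMap.fst ℝ ℝ ℝ
def pj2 : ℝ × ℝ →L[ℝ] ℝ := ContinuousLinearMap.snd ℝ ℝ ℝ
def e1c : ℝ × ℝ →L[ℝ] ℂ := Complex.ofRealCLM.comp pj1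
def e2c : ℝ × ℝ →L[ℝ] ℂ := Complex.ofRealCLM.comp pj2

def fA (ρ : ℝ → ℝ) (u : ℝ × ℝ → ℝ) (lam : ℂ) (w p : ℝ × ℝ) : ℂ :=
  lam * ((u p ^ 2 * c1 ρ p : ℝ) : ℂ) - ((GA ρ u w p : ℝ) : ℂ)

def fB (ρ : ℝ → ℝ) (u : ℝ × ℝ → ℝ) (lam : ℂ) (w p : ℝ × ℝ) : ℂ :=
  lam * ((u p ^ 2 * c2 ρ p : ℝ) : ℂ) - ((GB ρ u w p : ℝ) : ℂ)

/-- the pointwise derivative in `w` of the integrand -/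
def FD (ρ : ℝ → ℝ) (u : ℝ × ℝ → ℝ) (lam : ℂ) (w p : ℝ × ℝ) : ℝ × ℝ →L[ℝ] ℂ :=
  fA ρ u lam w p • e1c + fB ρ u lam w p • e2c

lemma jac_eq (ρ : ℝ → ℝ) (w p : ℝ × ℝ) : Jac ρ w p = (Dd ρ w p)^2 := by
  simp only [Jac, entA, entB, entC, Dd, c1, c2]; ring

lemma FD_apply (ρ : ℝ → ℝ) (u : ℝ × ℝ → ℝ) (lam : ℂ) (w p : ℝ × ℝ) (v : ℝ × ℝ) :
    FD ρ u lam w p v = fA ρ u lam w p * v.1 + fB ρ u lam w p * v.2 := by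
  simp [FD, e1c, e2c, pj1, pj2, smul_eq_mul]

section RadialCont

variable {ρ : ℝ → ℝ}

lemma deriv_zero_near (hρone : ∀ᶠ x in nhds (0 : ℝ), ρ x = 1) :
    ∃ δ > 0, ∀ t : ℝ, |t| < δ → deriv ρ t = 0 := by
  rcases Metric.eventually_nhds_iff.1 hρone with ⟨δ, hδ, h⟩
  refine ⟨δ, hδ, fun t ht => ?_⟩
  have h1 : ρ =ᶠ[nhds t] fun _ => 1 := by
    have : ∀ᶠ s in nhds t, |s| < δ :=
      (continuous_abs.continuousAt (x := t)).eventually_lt continuousAt_const ht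
    filter_upwards [this] with s hs
    exact h (by simpa [Real.dist_eq] using hs)
  rw [h1.deriv_eq, deriv_const]

lemma continuous_radialFactor (hρ : ContDiff ℝ (⊤ : ℕ∞) ρ)
    (hρone : ∀ᶠ x in nhds (0 : ℝ), ρ x = 1) : Continuous (radialFactor ρ) := by
  obtain ⟨δ, hδ, hz⟩ := deriv_zero_near hρone
  have hdc : Continuous (deriv ρ) := hρ.continuous_deriv (by simp)
  have hψ : Continuous (fun t : ℝ => deriv ρ t / t) := by
    rw [continuous_iff_continuousAt]
    intro t
    rcases lt_or_ge |t| δ with h | h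
    · have hev : (fun _ : ℝ => (0:ℝ)) =ᶠ[nhds t] fun s => deriv ρ s / s := by
        have : ∀ᶠ s in nhds t, |s| < δ :=
          (continuous_abs.continuousAt (x := t)).eventually_lt continuousAt_const h
        filter_upwards [this] with s hs
        rw [hz s hs, zero_div]
      exact continuousAt_const.congr hev
    · have ht : t ≠ 0 := by
        intro h0; rw [h0] at h; simp at h; linarith
      exact hdc.continuousAt.div continuousAt_id ht
  have hr : Continuous (fun p : ℝ × ℝ => Real.sqrt (p.1^2 + p.2^2)) :=
    Real.continuous_sqrt.comp ((continuous_fst.pow 2).add (continuous_snd.pow 2))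
  have heq : radialFactor ρ = fun p : ℝ × ℝ => deriv ρ (Real.sqrt (p.1^2 + p.2^2)) / Real.sqrt (p.1^2 + p.2^2) := by
    funext p
    by_cases hp : p = 0
    · subst hp
      simp [radialFactor, hz 0 (by simpa using hδ)]
    · simp [radialFactor, hp]
  rw [heq]
  exact hψ.comp hr

lemma sqrt_ge_norm (p : ℝ × ℝ) : ‖p‖ ≤ Real.sqrt (p.1^2 + p.2^2) := by
  rw [Prod.norm_def]
  have h1 : |p.1| ≤ Real.sqrt (p.1^2 + p.2^2) := by
    rw [← Real.sqrt_sq_eq_abs]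
    exact Real.sqrt_le_sqrt (by nlinarith [sq_nonneg p.2])
  have h2 : |p.2| ≤ Real.sqrt (p.1^2 + p.2^2) := by
    rw [← Real.sqrt_sq_eq_abs]
    exact Real.sqrt_le_sqrt (by nlinarith [sq_nonneg p.1])
  simp only [Real.norm_eq_abs]
  exact max_le h1 h2

lemma hcs_radialFactor (hρsupp : HasCompactSupport ρ) :
    HasCompactSupport (radialFactor ρ) := by
  obtain ⟨R, hR, hRz⟩ := (hρsupp.deriv).exists_pos_le_norm
  apply HasCompactSupport.intro (isCompact_closedBall (0 : ℝ × ℝ) R)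
  intro p hp
  have hnp : R < ‖p‖ := by simpa [Metric.mem_closedBall, dist_zero_right] using hp
  have hr : R ≤ ‖Real.sqrt (p.1^2 + p.2^2)‖ := by
    rw [Real.norm_eq_abs, _root_.abs_of_nonneg (Real.sqrt_nonneg _)]
    exact le_trans hnp.le (sqrt_ge_norm p)
  have hp0 : p ≠ 0 := by
    intro h0
    rw [h0] at hnp; simp at hnp; linarith
  simp [radialFactor, hp0, hRz _ hr]

end RadialCont

end Lem41

namespace Lem41
section Deriv
variable (ρ : ℝ → ℝ) (u : ℝ × ℝ → ℝ) (lam : ℂ)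

lemma hasFDerivAt_Dd (w p : ℝ × ℝ) :
    HasFDerivAt (fun w : ℝ × ℝ => Dd ρ w p) (c1 ρ p • pj1 + c2 ρ p • pj2) w :=
  ((hasFDerivAt_fst.mul_const (c1 ρ p)).const_add 1).add (hasFDerivAt_snd.mul_const (c2 ρ p))

lemma hasFDerivAt_Qf (w p : ℝ × ℝ) :
    HasFDerivAt (fun w : ℝ × ℝ => Qf ρ u w p) (Qa ρ u w p • pj1 + Qb ρ u w p • pj2) w := by
  have hrw : (fun w : ℝ × ℝ => Qf ρ u w p) = fun w : ℝ × ℝ =>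
      ((w.1*(c2 ρ p))*(w.1*(c2 ρ p)) + (1+w.2*(c2 ρ p))*(1+w.2*(c2 ρ p))) * (dX u p)
        * (dX u p)
      - 2*((1+w.1*(c1 ρ p))*(w.1*(c2 ρ p)) + (w.2*(c1 ρ p))*(1+w.2*(c2 ρ p))) * (dX u p)
        * (dY u p)
      + ((1+w.1*(c1 ρ p))*(1+w.1*(c1 ρ p)) + (w.2*(c1 ρ p))*(w.2*(c1 ρ p))) * (dY u p)
        * (dY u p) := by
    funext w; simp only [Qf, entA, entB, entC, c1, c2]; ring
  rw [hrw]
  have h1 : HasFDerivAt (fun w : ℝ × ℝ => w.1 * c2 ρ p) (c2 ρ p • pj1) w :=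
    hasFDerivAt_fst.mul_const _
  have h2 : HasFDerivAt (fun w : ℝ × ℝ => 1 + w.2 * c2 ρ p) (c2 ρ p • pj2) w :=
    (hasFDerivAt_snd.mul_const _).const_add 1
  have h3 : HasFDerivAt (fun w : ℝ × ℝ => 1 + w.1 * c1 ρ p) (c1 ρ p • pj1) w :=
    (hasFDerivAt_fst.mul_const _).const_add 1
  have h4 : HasFDerivAt (fun w : ℝ × ℝ => w.2 * c1 ρ p) (c1 ρ p • pj2) w :=
    hasFDerivAt_snd.mul_const _
  have hC := (((h1.mul h1).add (h2.mul h2)).mul_const (dX u p)).mul_const (dX u p)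
  have hB2 := ((((h3.mul h1).add (h4.mul h2)).const_mul 2).mul_const (dX u p)).mul_const (dY u p)
  have hA := ((((h3.mul h3).add (h4.mul h4)).mul_const (dY u p)).mul_const (dY u p))
  exact ((hC.sub hB2).add hA).congr_fderiv (by ext <;> simp [Qa, Qb, pj1, pj2] <;> ring)

lemma hasFDerivAt_Fq (w p : ℝ × ℝ) (hne : Dd ρ w p ≠ 0) :
    HasFDerivAt (fun w : ℝ × ℝ => Qf ρ u w p / Dd ρ w p)
      (GA ρ u w p • pj1 + GB ρ u w p • pj2) w := by
  have hD := hasFDerivAt_Dd ρ w p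
  have hQ := hasFDerivAt_Qf ρ u w p
  have hinv : HasFDerivAt (fun w : ℝ × ℝ => (Dd ρ w p)⁻¹)
      ((-(Dd ρ w p ^ 2)⁻¹) • (c1 ρ p • pj1 + c2 ρ p • pj2)) w :=
    (hasDerivAt_inv hne).comp_hasFDerivAt w hD
  have hsh : (fun w : ℝ × ℝ => Qf ρ u w p / Dd ρ w p)
      = fun w : ℝ × ℝ => Qf ρ u w p * (Dd ρ w p)⁻¹ := by
    funext w; rw [div_eq_mul_inv]
  rw [hsh]
  refine (hQ.mul hinv).congr_fderiv ?_
  ext <;> simp [GA, GB, pj1, pj2] <;> field_simp <;> ring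

lemma hasFDerivAt_Fn (w p : ℝ × ℝ) :
    HasFDerivAt (fun w : ℝ × ℝ => u p ^ 2 * Dd ρ w p)
      ((u p ^ 2 * c1 ρ p) • pj1 + (u p ^ 2 * c2 ρ p) • pj2) w :=
  ((hasFDerivAt_Dd ρ w p).const_mul (u p ^ 2)).congr_fderiv
    (by ext <;> simp [pj1, pj2] <;> ring)

lemma hasFDerivAt_Fc (w p : ℝ × ℝ) (hne : Dd ρ w p ≠ 0) :
    HasFDerivAt (fun w : ℝ × ℝ => Fc ρ u lam w p) (FD ρ u lam w p) w := by
  have h1 := (Complex.ofRealCLM.hasFDerivAt.comp w (hasFDerivAt_Fq ρ u w p hne)).neg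
  have h2 := (Complex.ofRealCLM.hasFDerivAt.comp w (hasFDerivAt_Fn ρ u w p)).const_mul lam
  have H := h1.add h2
  have hsh : (fun w : ℝ × ℝ =>
      -((Complex.ofRealCLM ∘ fun w : ℝ × ℝ => Qf ρ u w p / Dd ρ w p) w)
        + lam * (Complex.ofRealCLM ∘ fun w : ℝ × ℝ => u p ^ 2 * Dd ρ w p) w)
      = fun w : ℝ × ℝ => Fc ρ u lam w p := by
    funext w; simp [Fc, Function.comp]
  rw [← hsh]
  exact H.congr_fderiv (by ext <;> simp [FD, fA, fB, e1c, e2c, pj1, pj2] <;> ring)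

end Deriv
end Lem41

namespace Lem41

lemma rpow_neghalf_sq {d : ℝ} (hd : 0 < d) : (d^2 : ℝ) ^ (-(1:ℝ)/2) = d⁻¹ := by
  rw [← Real.rpow_natCast d 2, ← Real.rpow_mul hd.le]
  norm_num [Real.rpow_neg_one]

lemma rpow_half_sq {d : ℝ} (hd : 0 < d) : (d^2 : ℝ) ^ ((1:ℝ)/2) = d := by
  rw [← Real.rpow_natCast d 2, ← Real.rpow_mul hd.le]
  norm_num

lemma wirt1 (ρ : ℝ → ℝ) (u : ℝ × ℝ → ℝ) (lam : ℂ) (p : ℝ × ℝ) :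
    (1/2 : ℂ) * (FD ρ u lam 0 p (1,0) - Complex.I * FD ρ u lam 0 p (0,1)) =
      2 * ((dZ u p)^2 * (((p.1:ℂ) + (p.2:ℂ) * Complex.I) * ((radialFactor ρ p : ℝ):ℂ)))
      + lam/2 * (((u p : ℝ):ℂ)^2 * (((p.1:ℂ) - (p.2:ℂ) * Complex.I) * ((radialFactor ρ p : ℝ):ℂ))) := by
  rw [FD_apply, FD_apply]
  simp only [fA, fB, GA, GB, Qa, Qb, Qf, entA, entB, entC, Dd, c1, c2, dZ, dX, dY,
    Prod.fst_zero, Prod.snd_zero, zero_mul, mul_zero, add_zero, zero_add, mul_one, one_pow,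
    div_one]
  push_cast
  simp only [Complex.ext_iff, pow_two]
  constructor <;> simp <;> ring

lemma wirt2 (ρ : ℝ → ℝ) (u : ℝ × ℝ → ℝ) (lam : ℂ) (p : ℝ × ℝ) :
    (1/2 : ℂ) * (FD ρ u lam 0 p (1,0) + Complex.I * FD ρ u lam 0 p (0,1)) =
      2 * ((dZbar u p)^2 * (((p.1:ℂ) - (p.2:ℂ) * Complex.I) * ((radialFactor ρ p : ℝ):ℂ)))
      + lam/2 * (((u p : ℝ):ℂ)^2 * (((p.1:ℂ) + (p.2:ℂ) * Complex.I) * ((radialFactor ρ p : ℝ):ℂ))) := by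
  rw [FD_apply, FD_apply]
  simp only [fA, fB, GA, GB, Qa, Qb, Qf, entA, entB, entC, Dd, c1, c2, dZbar, dX, dY,
    Prod.fst_zero, Prod.snd_zero, zero_mul, mul_zero, add_zero, zero_add, mul_one, one_pow,
    div_one]
  push_cast
  simp only [Complex.ext_iff, pow_two]
  constructor <;> simp <;> ring

end Lem41

set_option maxHeartbeats 1000000 in
open Lem41 in
/-- Variation of the quadratic forms under shifting of a conical point (Lemma 4.1):
for `ρ` smooth, compactly supported and equal to `1` near `0`, `u` smooth compactly
supported and `λ ∈ ℂ`, the function `w = (a,b) ↦ −q_w(u) + λ n_w(u)` is differentiable at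
`w = 0` and its Wirtinger derivatives there are
`½(∂_a − i∂_b)[⋯] = 2∫ (∂_z u)² (z ρ'(r)/r) + (λ/2)∫ u² (z̄ ρ'(r)/r)` and
`½(∂_a + i∂_b)[⋯] = 2∫ (∂_{z̄} u)² (z̄ ρ'(r)/r) + (λ/2)∫ u² (z ρ'(r)/r)`,
where `z = x + iy` and `z̄ = x − iy`. -/
theorem stmt0 (ρ : ℝ → ℝ) (hρ : ContDiff ℝ (⊤ : ℕ∞) ρ) (hρsupp : HasCompactSupport ρ)
    (hρone : ∀ᶠ x in nhds (0 : ℝ), ρ x = 1)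
    (u : ℝ × ℝ → ℝ) (hu : ContDiff ℝ (⊤ : ℕ∞) u) (husupp : HasCompactSupport u)
    (lam : ℂ) :
    ∃ L : ℝ × ℝ →L[ℝ] ℂ,
      HasFDerivAt
        (fun w : ℝ × ℝ => -(qForm ρ u w : ℂ) + lam * (nForm ρ u w : ℂ)) L (0, 0) ∧
      (1 / 2 : ℂ) * (L (1, 0) - Complex.I * L (0, 1)) =
        2 * (∫ p : ℝ × ℝ, (dZ u p) ^ 2 *
              (((p.1 : ℂ) + (p.2 : ℂ) * Complex.I) * (radialFactor ρ p : ℂ))) +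
        (lam / 2) * (∫ p : ℝ × ℝ, (u p : ℂ) ^ 2 *
              (((p.1 : ℂ) - (p.2 : ℂ) * Complex.I) * (radialFactor ρ p : ℂ))) ∧
      (1 / 2 : ℂ) * (L (1, 0) + Complex.I * L (0, 1)) =
        2 * (∫ p : ℝ × ℝ, (dZbar u p) ^ 2 *
              (((p.1 : ℂ) - (p.2 : ℂ) * Complex.I) * (radialFactor ρ p : ℂ))) +
        (lam / 2) * (∫ p : ℝ × ℝ, (u p : ℂ) ^ 2 *
              (((p.1 : ℂ) + (p.2 : ℂ) * Complex.I) * (radialFactor ρ p : ℂ))) := by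
  classical
  -- basic continuity
  have hη : Continuous (radialFactor ρ) := continuous_radialFactor hρ hρone
  have hηcs : HasCompactSupport (radialFactor ρ) := hcs_radialFactor hρsupp
  have hX : Continuous (dX u) := (hu.continuous_fderiv (by simp)).clm_apply continuous_const
  have hY : Continuous (dY u) := (hu.continuous_fderiv (by simp)).clm_apply continuous_const
  have hucont : Continuous u := hu.continuous
  have hc1 : Continuous (c1 ρ) := continuous_fst.mul hη
  have hc2 : Continuous (c2 ρ) := continuous_snd.mul hη
  have hc1cs : HasCompactSupport (c1 ρ) := hηcs.mul_left
  have hc2cs : HasCompactSupport (c2 ρ) := hηcs.mul_left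
  -- bounds on c1, c2
  obtain ⟨M1, hM1⟩ : ∃ M, ∀ p, |c1 ρ p| ≤ M := by
    obtain ⟨x0, hx0⟩ := (hc1.abs).exists_forall_ge_of_hasCompactSupport
      (hc1cs.comp_left (g := fun t : ℝ => |t|) abs_zero)
    exact ⟨_, hx0⟩
  obtain ⟨M2, hM2⟩ : ∃ M, ∀ p, |c2 ρ p| ≤ M := by
    obtain ⟨x0, hx0⟩ := (hc2.abs).exists_forall_ge_of_hasCompactSupport
      (hc2cs.comp_left (g := fun t : ℝ => |t|) abs_zero)
    exact ⟨_, hx0⟩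
  have hM1n : 0 ≤ M1 := le_trans (abs_nonneg _) (hM1 0)
  have hM2n : 0 ≤ M2 := le_trans (abs_nonneg _) (hM2 0)
  set ε : ℝ := 1 / (2 * (M1 + M2 + 1)) with hεdef
  have hεpos : 0 < ε := by positivity
  have hDlow : ∀ w : ℝ × ℝ, ‖w‖ ≤ ε → ∀ p, (1:ℝ)/2 ≤ Dd ρ w p := by
    intro w hw p
    have h1 : |w.1| ≤ ‖w‖ := by rw [← Real.norm_eq_abs]; exact norm_fst_le w
    have h2 : |w.2| ≤ ‖w‖ := by rw [← Real.norm_eq_abs]; exact norm_snd_le w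
    have e1 : |w.1 * c1 ρ p| ≤ ‖w‖ * M1 := by
      rw [abs_mul]; exact mul_le_mul h1 (hM1 p) (abs_nonneg _) (norm_nonneg _)
    have e2 : |w.2 * c2 ρ p| ≤ ‖w‖ * M2 := by
      rw [abs_mul]; exact mul_le_mul h2 (hM2 p) (abs_nonneg _) (norm_nonneg _)
    have hwε : ‖w‖ * (M1 + M2) ≤ 1/2 - ε := by
      have h3 : ‖w‖ * (M1 + M2) ≤ ε * (M1 + M2) :=
        mul_le_mul_of_nonneg_right hw (by linarith)
      have h4 : ε * (M1 + M2 + 1) = 1/2 := by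
        rw [hεdef]; field_simp
      nlinarith
    have := abs_le.1 e1
    have := abs_le.1 e2
    simp only [Dd]
    nlinarith [norm_nonneg w]
  have hne : ∀ w ∈ Metric.ball (0:ℝ×ℝ) ε, ∀ p, Dd ρ w p ≠ 0 := by
    intro w hw p
    have := hDlow w (le_of_lt (mem_ball_zero_iff.1 hw)) p
    linarith
  -- vanishing outside tsupport u
  have hvan : ∀ p, p ∉ tsupport u → u p = 0 ∧ dX u p = 0 ∧ dY u p = 0 := by
    intro p hp
    have h0 : fderiv ℝ u p = 0 := by
      by_contra h
      exact hp (support_fderiv_subset ℝ (Function.mem_support.2 h))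
    exact ⟨image_eq_zero_of_notMem_tsupport hp, by simp [dX, h0], by simp [dY, h0]⟩
  have hFD0 : ∀ w p, p ∉ tsupport u → FD ρ u lam w p = 0 := by
    intro w p hp
    obtain ⟨h0, hX0, hY0⟩ := hvan p hp
    have hQf : Qf ρ u w p = 0 := by simp [Qf, hX0, hY0]
    have hQa : Qa ρ u w p = 0 := by simp [Qa, hX0, hY0]
    have hQb : Qb ρ u w p = 0 := by simp [Qb, hX0, hY0]
    ext v <;> simp [FD, fA, fB, e1c, e2c, pj1, pj2, GA, GB, hQf, hQa, hQb, h0]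
  -- joint continuity
  have hDdj : Continuous fun q : (ℝ×ℝ)×(ℝ×ℝ) => Dd ρ q.1 q.2 := by
    unfold Dd c1 c2; fun_prop
  have hQfj : Continuous fun q : (ℝ×ℝ)×(ℝ×ℝ) => Qf ρ u q.1 q.2 := by
    unfold Qf entA entB entC
    have hX' : Continuous fun p : ℝ×ℝ => dX u p := hX
    have hY' : Continuous fun p : ℝ×ℝ => dY u p := hY
    fun_prop
  have hQaj : Continuous fun q : (ℝ×ℝ)×(ℝ×ℝ) => Qa ρ u q.1 q.2 := by
    unfold Qa c1 c2
    have hX' : Continuous fun p : ℝ×ℝ => dX u p := hX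
    have hY' : Continuous fun p : ℝ×ℝ => dY u p := hY
    fun_prop
  have hQbj : Continuous fun q : (ℝ×ℝ)×(ℝ×ℝ) => Qb ρ u q.1 q.2 := by
    unfold Qb c1 c2
    have hX' : Continuous fun p : ℝ×ℝ => dX u p := hX
    have hY' : Continuous fun p : ℝ×ℝ => dY u p := hY
    fun_prop
  -- fixed-w continuity
  have hDdc : ∀ w : ℝ×ℝ, Continuous fun p => Dd ρ w p :=
    fun w => hDdj.comp (continuous_const.prodMk continuous_id)
  have hQfc : ∀ w : ℝ×ℝ, Continuous fun p => Qf ρ u w p :=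
    fun w => hQfj.comp (continuous_const.prodMk continuous_id)
  have hQac : ∀ w : ℝ×ℝ, Continuous fun p => Qa ρ u w p :=
    fun w => hQaj.comp (continuous_const.prodMk continuous_id)
  have hQbc : ∀ w : ℝ×ℝ, Continuous fun p => Qb ρ u w p :=
    fun w => hQbj.comp (continuous_const.prodMk continuous_id)
  have hGAc : ∀ w ∈ Metric.ball (0:ℝ×ℝ) ε, Continuous fun p => GA ρ u w p := by
    intro w hw
    exact ((hQac w).mul (hDdc w) |>.sub ((hQfc w).mul hc1)).div ((hDdc w).pow 2)
      (fun p => pow_ne_zero 2 (hne w hw p))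
  have hGBc : ∀ w ∈ Metric.ball (0:ℝ×ℝ) ε, Continuous fun p => GB ρ u w p := by
    intro w hw
    exact ((hQbc w).mul (hDdc w) |>.sub ((hQfc w).mul hc2)).div ((hDdc w).pow 2)
      (fun p => pow_ne_zero 2 (hne w hw p))
  have hFDc : ∀ w ∈ Metric.ball (0:ℝ×ℝ) ε, Continuous fun p => FD ρ u lam w p := by
    intro w hw
    apply Continuous.add
    · exact (((continuous_const.mul (Complex.continuous_ofReal.comp
        ((hucont.pow 2).mul hc1))).sub
        (Complex.continuous_ofReal.comp (hGAc w hw))).smul continuous_const)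
    · exact (((continuous_const.mul (Complex.continuous_ofReal.comp
        ((hucont.pow 2).mul hc2))).sub
        (Complex.continuous_ofReal.comp (hGBc w hw))).smul continuous_const)
  -- integrability of the pieces, for w ∈ ball
  have hQint : ∀ w ∈ Metric.ball (0:ℝ×ℝ) ε,
      Integrable (fun p => Qf ρ u w p / Dd ρ w p) := by
    intro w hw
    apply Continuous.integrable_of_hasCompactSupport
      ((hQfc w).div (hDdc w) (hne w hw))
    apply HasCompactSupport.intro husupp
    intro p hp
    obtain ⟨_, hX0, hY0⟩ := hvan p hp
    simp [Qf, hX0, hY0]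
  have hNint : ∀ w : ℝ×ℝ, Integrable (fun p => u p ^ 2 * Dd ρ w p) := by
    intro w
    apply Continuous.integrable_of_hasCompactSupport ((hucont.pow 2).mul (hDdc w))
    apply HasCompactSupport.intro husupp
    intro p hp
    simp [image_eq_zero_of_notMem_tsupport hp]
  -- q and n forms rewritten on the ball
  have hq : ∀ w ∈ Metric.ball (0:ℝ×ℝ) ε,
      qForm ρ u w = ∫ p : ℝ×ℝ, Qf ρ u w p / Dd ρ w p := by
    intro w hw
    refine integral_congr_ae (Filter.Eventually.of_forall fun p => ?_)
    have hD := hDlow w (le_of_lt (mem_ball_zero_iff.1 hw)) p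
    have hDpos : (0:ℝ) < Dd ρ w p := by linarith
    show Qf ρ u w p * (Jac ρ w p) ^ (-(1:ℝ)/2) = _
    rw [jac_eq, rpow_neghalf_sq hDpos]
    exact (div_eq_mul_inv _ _).symm
  have hn : ∀ w ∈ Metric.ball (0:ℝ×ℝ) ε,
      nForm ρ u w = ∫ p : ℝ×ℝ, u p ^ 2 * Dd ρ w p := by
    intro w hw
    refine integral_congr_ae (Filter.Eventually.of_forall fun p => ?_)
    have hD := hDlow w (le_of_lt (mem_ball_zero_iff.1 hw)) p
    have hDpos : (0:ℝ) < Dd ρ w p := by linarith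
    show u p ^ 2 * (Jac ρ w p) ^ ((1:ℝ)/2) = _
    rw [jac_eq, rpow_half_sq hDpos]
  -- the eventual equality
  have heq : (fun w : ℝ×ℝ => -(qForm ρ u w : ℂ) + lam * (nForm ρ u w : ℂ))
      =ᶠ[nhds (0:ℝ×ℝ)] fun w => ∫ p : ℝ×ℝ, Fc ρ u lam w p := by
    filter_upwards [Metric.ball_mem_nhds (0:ℝ×ℝ) hεpos] with w hw
    rw [hq w hw, hn w hw]
    have e1 : ((∫ p : ℝ×ℝ, Qf ρ u w p / Dd ρ w p : ℝ) : ℂ)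
        = ∫ p : ℝ×ℝ, ((Qf ρ u w p / Dd ρ w p : ℝ) : ℂ) := integral_ofReal.symm
    have e2 : ((∫ p : ℝ×ℝ, u p ^ 2 * Dd ρ w p : ℝ) : ℂ)
        = ∫ p : ℝ×ℝ, ((u p ^ 2 * Dd ρ w p : ℝ) : ℂ) := integral_ofReal.symm
    have hi1 : Integrable (fun p : ℝ×ℝ => -((Qf ρ u w p / Dd ρ w p : ℝ) : ℂ)) volume :=
      ((hQint w hw).ofReal).neg
    have hi2 : Integrable (fun p : ℝ×ℝ => lam * ((u p ^ 2 * Dd ρ w p : ℝ) : ℂ)) volume :=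
      ((hNint w).ofReal).const_mul lam
    rw [e1, e2, ← integral_neg, ← integral_const_mul, ← integral_add hi1 hi2]
    exact integral_congr_ae (Filter.Eventually.of_forall fun p => rfl)
  -- compactness bound
  have hScomp : IsCompact ((Metric.closedBall (0:ℝ×ℝ) ε) ×ˢ tsupport u) :=
    (isCompact_closedBall _ _).prod husupp
  have hSne : ∀ q ∈ (Metric.closedBall (0:ℝ×ℝ) ε) ×ˢ tsupport u, Dd ρ q.1 q.2 ≠ 0 := by
    intro q hq'
    have := hDlow q.1 (by simpa [Metric.mem_closedBall, dist_zero_right] using hq'.1) q.2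
    linarith
  have hFDcontOn : ContinuousOn (fun q : (ℝ×ℝ)×(ℝ×ℝ) => FD ρ u lam q.1 q.2)
      ((Metric.closedBall (0:ℝ×ℝ) ε) ×ˢ tsupport u) := by
    have hGAon : ContinuousOn (fun q : (ℝ×ℝ)×(ℝ×ℝ) => GA ρ u q.1 q.2)
        ((Metric.closedBall (0:ℝ×ℝ) ε) ×ˢ tsupport u) := by
      apply ContinuousOn.div
      · exact ((hQaj.mul hDdj).sub (hQfj.mul (hc1.comp continuous_snd))).continuousOn
      · exact (hDdj.pow 2).continuousOn
      · exact fun q hq' => pow_ne_zero 2 (hSne q hq')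
    have hGBon : ContinuousOn (fun q : (ℝ×ℝ)×(ℝ×ℝ) => GB ρ u q.1 q.2)
        ((Metric.closedBall (0:ℝ×ℝ) ε) ×ˢ tsupport u) := by
      apply ContinuousOn.div
      · exact ((hQbj.mul hDdj).sub (hQfj.mul (hc2.comp continuous_snd))).continuousOn
      · exact (hDdj.pow 2).continuousOn
      · exact fun q hq' => pow_ne_zero 2 (hSne q hq')
    apply ContinuousOn.add
    · exact ((((continuous_const.mul (Complex.continuous_ofReal.comp
        (((hucont.comp continuous_snd).pow 2).mul (hc1.comp continuous_snd)))).continuousOn).sub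
        (Complex.continuous_ofReal.comp_continuousOn hGAon)).smul continuousOn_const)
    · exact ((((continuous_const.mul (Complex.continuous_ofReal.comp
        (((hucont.comp continuous_snd).pow 2).mul (hc2.comp continuous_snd)))).continuousOn).sub
        (Complex.continuous_ofReal.comp_continuousOn hGBon)).smul continuousOn_const)
  obtain ⟨Cb, hCb⟩ := hScomp.exists_bound_of_continuousOn hFDcontOn
  -- dominated differentiation
  have key : HasFDerivAt (fun w : ℝ×ℝ => ∫ p : ℝ×ℝ, Fc ρ u lam w p)
      (∫ p : ℝ×ℝ, FD ρ u lam 0 p) 0 := by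
    apply hasFDerivAt_integral_of_dominated_of_fderiv_le (s := Metric.ball (0:ℝ×ℝ) ε)
      (bound := Set.indicator (tsupport u) (fun _ => max Cb 0)) (Metric.ball_mem_nhds (0:ℝ×ℝ) hεpos)
    · filter_upwards [Metric.ball_mem_nhds (0:ℝ×ℝ) hεpos] with w hw
      apply Continuous.aestronglyMeasurable
      exact ((Complex.continuous_ofReal.comp ((hQfc w).div (hDdc w) (hne w hw))).neg).add
        (continuous_const.mul (Complex.continuous_ofReal.comp ((hucont.pow 2).mul (hDdc w))))
    · have h0 : (0:ℝ×ℝ) ∈ Metric.ball (0:ℝ×ℝ) ε := Metric.mem_ball_self hεpos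
      apply Integrable.add
      · exact ((hQint 0 h0).ofReal.neg)
      · exact (((hNint 0).ofReal).const_mul lam)
    · exact (hFDc 0 (Metric.mem_ball_self hεpos)).aestronglyMeasurable
    · refine Filter.Eventually.of_forall fun p => fun w hw => ?_
      by_cases hp : p ∈ tsupport u
      · rw [Set.indicator_of_mem hp]
        exact le_trans (hCb (w, p) ⟨Metric.ball_subset_closedBall hw, hp⟩) (le_max_left _ _)
      · rw [Set.indicator_of_notMem hp, hFD0 w p hp]
        simp
    · rw [integrable_indicator_iff (isClosed_tsupport u).measurableSet]
      exact integrableOn_const ((husupp : IsCompact (tsupport u)).measure_lt_top).ne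
    · exact Filter.Eventually.of_forall fun p => fun w hw =>
        hasFDerivAt_Fc ρ u lam w p (hne w hw p)
  have hmain : HasFDerivAt
      (fun w : ℝ×ℝ => -(qForm ρ u w : ℂ) + lam * (nForm ρ u w : ℂ))
      (∫ p : ℝ×ℝ, FD ρ u lam 0 p) ((0,0) : ℝ×ℝ) :=
    key.congr_of_eventuallyEq heq
  have h0b : (0:ℝ×ℝ) ∈ Metric.ball (0:ℝ×ℝ) ε := Metric.mem_ball_self hεpos
  have hFDint : Integrable (fun p => FD ρ u lam 0 p) volume :=
    (hFDc 0 h0b).integrable_of_hasCompactSupport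
      (HasCompactSupport.intro husupp (fun p hp => hFD0 0 p hp))
  have hf1 : Integrable (fun p : ℝ×ℝ => FD ρ u lam 0 p (1,0)) volume := by
    apply Continuous.integrable_of_hasCompactSupport ((hFDc 0 h0b).clm_apply continuous_const)
    apply HasCompactSupport.intro husupp
    intro p hp
    rw [hFD0 0 p hp]; rfl
  have hf2 : Integrable (fun p : ℝ×ℝ => FD ρ u lam 0 p (0,1)) volume := by
    apply Continuous.integrable_of_hasCompactSupport ((hFDc 0 h0b).clm_apply continuous_const)
    apply HasCompactSupport.intro husupp
    intro p hp
    rw [hFD0 0 p hp]; rfl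
  have hf2' : Integrable (fun p : ℝ×ℝ => Complex.I * FD ρ u lam 0 p (0,1)) volume :=
    hf2.const_mul _
  have hdZc : Continuous (dZ u) := by
    unfold dZ
    have hX' : Continuous fun p : ℝ×ℝ => dX u p := hX
    have hY' : Continuous fun p : ℝ×ℝ => dY u p := hY
    fun_prop
  have hdZbc : Continuous (dZbar u) := by
    unfold dZbar
    have hX' : Continuous fun p : ℝ×ℝ => dX u p := hX
    have hY' : Continuous fun p : ℝ×ℝ => dY u p := hY
    fun_prop
  have hg1 : Integrable (fun p : ℝ×ℝ => (dZ u p)^2 *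
      (((p.1:ℂ) + (p.2:ℂ) * Complex.I) * ((radialFactor ρ p : ℝ):ℂ))) volume := by
    apply Continuous.integrable_of_hasCompactSupport (by fun_prop)
    apply HasCompactSupport.intro (hηcs : IsCompact (tsupport (radialFactor ρ)))
    intro p hp
    simp [image_eq_zero_of_notMem_tsupport hp]
  have hg2 : Integrable (fun p : ℝ×ℝ => ((u p : ℝ):ℂ)^2 *
      (((p.1:ℂ) - (p.2:ℂ) * Complex.I) * ((radialFactor ρ p : ℝ):ℂ))) volume := by
    apply Continuous.integrable_of_hasCompactSupport (by fun_prop)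
    apply HasCompactSupport.intro (hηcs : IsCompact (tsupport (radialFactor ρ)))
    intro p hp
    simp [image_eq_zero_of_notMem_tsupport hp]
  have hg1b : Integrable (fun p : ℝ×ℝ => (dZbar u p)^2 *
      (((p.1:ℂ) - (p.2:ℂ) * Complex.I) * ((radialFactor ρ p : ℝ):ℂ))) volume := by
    apply Continuous.integrable_of_hasCompactSupport (by fun_prop)
    apply HasCompactSupport.intro (hηcs : IsCompact (tsupport (radialFactor ρ)))
    intro p hp
    simp [image_eq_zero_of_notMem_tsupport hp]
  have hg2b : Integrable (fun p : ℝ×ℝ => ((u p : ℝ):ℂ)^2 *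
      (((p.1:ℂ) + (p.2:ℂ) * Complex.I) * ((radialFactor ρ p : ℝ):ℂ))) volume := by
    apply Continuous.integrable_of_hasCompactSupport (by fun_prop)
    apply HasCompactSupport.intro (hηcs : IsCompact (tsupport (radialFactor ρ)))
    intro p hp
    simp [image_eq_zero_of_notMem_tsupport hp]
  refine ⟨∫ p : ℝ×ℝ, FD ρ u lam 0 p, hmain, ?_, ?_⟩
  · rw [ContinuousLinearMap.integral_apply hFDint, ContinuousLinearMap.integral_apply hFDint,
      ← integral_const_mul Complex.I, ← integral_sub hf1 hf2', ← integral_const_mul ((1:ℂ)/2),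
      ← integral_const_mul 2, ← integral_const_mul (lam/2),
      ← integral_add (hg1.const_mul 2) (hg2.const_mul (lam/2))]
    exact integral_congr_ae (Filter.Eventually.of_forall fun p => wirt1 ρ u lam p)
  · rw [ContinuousLinearMap.integral_apply hFDint, ContinuousLinearMap.integral_apply hFDint,
      ← integral_const_mul Complex.I, ← integral_add hf1 hf2', ← integral_const_mul ((1:ℂ)/2),
      ← integral_const_mul 2, ← integral_const_mul (lam/2),
      ← integral_add (hg1b.const_mul 2) (hg2b.const_mul (lam/2))]
    exact integral_congr_ae (Filter.Eventually.of_forall fun p => wirt2 ρ u lam p)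

end
end

section
/- Let E be a normed real vector space and let q, n : ℝ → (E →L[ℝ] E →L[ℝ] ℝ) be maps into continuous bilinear forms that are differentiable at t = 0, with q_t and n_t symmetric for every t. Let u : ℝ → E and λ : ℝ → ℝ be differentiable at t = 0, suppose n₀(u₀, u₀) = 1, and suppose that for all t in a neighborhood of 0 and all v ∈ E one has q_t(u_t, v) = λ_t · n_t(u_t, v). Then λ'(0) = q̇₀(u₀, u₀) − λ(0) · ṅ₀(u₀, u₀), where q̇₀ and ṅ₀ denote the derivatives of t ↦ q_t and t ↦ n_t at t = 0. -/
open Filter Topology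

section

variable {𝕜 E F G : Type*} [NontriviallyNormedField 𝕜]
  [NormedAddCommGroup E] [NormedSpace 𝕜 E] [NormedAddCommGroup F] [NormedSpace 𝕜 F]
  [NormedAddCommGroup G] [NormedSpace 𝕜 G]

theorem HasDerivAt.clm_apply_apply_const {B : 𝕜 → E →L[𝕜] F →L[𝕜] G} {B' : E →L[𝕜] F →L[𝕜] G}
    {x : 𝕜 → E} {x' : E} {t : 𝕜} (hB : HasDerivAt B B' t) (hx : HasDerivAt x x' t) (y : F) :
    HasDerivAt (fun s => B s (x s) y) (B' (x t) y + B t x' y) t := by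
  simpa using (hB.clm_apply hx).clm_apply (hasDerivAt_const t y)

theorem HasDerivAt.deriv_eigenEquation {q n : 𝕜 → E →L[𝕜] E →L[𝕜] 𝕜} {q' n' : E →L[𝕜] E →L[𝕜] 𝕜}
    {u : 𝕜 → E} {u' : E} {lam : 𝕜 → 𝕜} {lam' t₀ : 𝕜}
    (hq : HasDerivAt q q' t₀) (hn : HasDerivAt n n' t₀) (hu : HasDerivAt u u' t₀)
    (hlam : HasDerivAt lam lam' t₀)
    (heig : ∀ᶠ t in 𝓝 t₀, ∀ v : E, q t (u t) v = lam t * n t (u t) v) (v : E) :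
    q' (u t₀) v + q t₀ u' v = lam' * n t₀ (u t₀) v + lam t₀ * (n' (u t₀) v + n t₀ u' v) := by
  have hrhs := hlam.mul (hn.clm_apply_apply_const hu v)
  have hlhs := (hq.clm_apply_apply_const hu v).congr_of_eventuallyEq
    (heig.mono fun t ht => (ht v).symm)
  exact hlhs.unique hrhs

end

/-- Feynman–Hellmann formula: if `q_t`, `n_t` are families of symmetric continuous
bilinear forms differentiable at `t = 0`, `(λ_t, u_t)` is a differentiable eigenbranch,
i.e. `q_t(u_t, v) = λ_t n_t(u_t, v)` for all `v` and `t` near `0`, normalized by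
`n₀(u₀,u₀) = 1`, then `λ'(0) = q̇₀(u₀,u₀) − λ(0) ṅ₀(u₀,u₀)`. -/
theorem stmt1 {E : Type*} [NormedAddCommGroup E] [NormedSpace ℝ E]
    (q n : ℝ → E →L[ℝ] E →L[ℝ] ℝ)
    (hq : DifferentiableAt ℝ q 0) (hn : DifferentiableAt ℝ n 0)
    (hqsymm : ∀ t x y, q t x y = q t y x) (hnsymm : ∀ t x y, n t x y = n t y x)
    (u : ℝ → E) (lam : ℝ → ℝ)
    (hu : DifferentiableAt ℝ u 0) (hlam : DifferentiableAt ℝ lam 0)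
    (hnorm : n 0 (u 0) (u 0) = 1)
    (heig : ∀ᶠ t in nhds (0 : ℝ), ∀ v : E, q t (u t) v = lam t * n t (u t) v) :
    deriv lam 0 = deriv q 0 (u 0) (u 0) - lam 0 * deriv n 0 (u 0) (u 0) := by
  -- `𝕜` and `F` are given explicitly so that unification sees through the two `AddCommGroup`
  -- instances on `E →L[ℝ] E →L[ℝ] ℝ`.
  have hq' := hq.hasDerivAt (𝕜 := ℝ) (F := E →L[ℝ] E →L[ℝ] ℝ)
  have hn' := hn.hasDerivAt (𝕜 := ℝ) (F := E →L[ℝ] E →L[ℝ] ℝ)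
  have hderiv := hq'.deriv_eigenEquation hn' hu.hasDerivAt hlam.hasDerivAt heig (u 0)
  -- By symmetry and the eigenvalue equation at `t = 0`, the terms involving `u'(0)` cancel.
  have hcross : q 0 (deriv u 0) (u 0) = lam 0 * n 0 (deriv u 0) (u 0) := by
    rw [hqsymm, heig.self_of_nhds, hnsymm]
  rw [hcross, hnorm] at hderiv
  linarith
end

section
/- Let h : (0,∞) → ℝ be a measurable function supported in (0,1] such that there is a constant C with |h(μ)| ≤ C/(ln μ)² for all μ ∈ (0,1). Then there is a constant C′ such that for all t ≥ e, | t ∫₀¹ e^{−tμ²} h(μ) · 2μ dμ | ≤ C′/(ln t)². -/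
/-!
Split the integral at `s = t^{-1/4}`. On `[0, s]` the bound `|h μ| ≤ C / (ln s)²` holds, and
`t ∫₀ˢ e^{-tμ²} 2μ dμ ≤ 1`, which gives `C / (ln s)² = 16 C / (ln t)²`. On `[s, 1]` the Gaussian
factor is at most `e^{-t s²} = e^{-√t}`, and `t e^{-√t}` decays faster than any power of `1 / ln t`.

No integrability of `h` is needed: on `[0, 1]` the Gaussian factor is bounded below, so `|h μ| 2μ`
is integrable as soon as the integrand is for a single `t`; otherwise the integral is `0`.
-/

open Real MeasureTheory intervalIntegral Set

variable {h : ℝ → ℝ} {C t s : ℝ}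

lemma integral_exp_neg_mul_sq_mul_two_mul_le (ht : 0 < t) (s : ℝ) :
    ∫ μ in 0..s, exp (-t * μ ^ 2) * (2 * μ) ≤ 1 / t := by
  have hderiv : ∀ x ∈ uIcc 0 s,
      HasDerivAt (fun y => -exp (-t * y ^ 2) / t) (exp (-t * x ^ 2) * (2 * x)) x := by
    intro x _
    refine ((((hasDerivAt_pow 2 x).const_mul (-t)).exp).neg.div_const t).congr_deriv ?_
    field_simp
    ring
  rw [integral_eq_sub_of_hasDerivAt hderiv (Continuous.intervalIntegrable (by fun_prop) _ _)]
  have := exp_pos (-t * s ^ 2)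
  simp only [mul_zero, ne_eq, OfNat.ofNat_ne_zero, not_false_eq_true, zero_pow, exp_zero]
  rw [div_sub_div_same, div_le_div_iff_of_pos_right ht]
  linarith

lemma div_log_sq_le_div_log_sq (hC : 0 ≤ C) {x : ℝ} (hx : 0 < x) (hxs : x ≤ s) (hs : s < 1) :
    C / log x ^ 2 ≤ C / log s ^ 2 := by
  have hlogs : log s < 0 := log_neg (hx.trans_le hxs) hs
  have hlogx : log x ≤ log s := log_le_log hx hxs
  exact div_le_div_of_nonneg_left hC (sq_pos_of_neg hlogs) (by nlinarith)

lemma nonneg_of_abs_le_div_log_sq (hbound : ∀ μ ∈ Ioo (0 : ℝ) 1, |h μ| ≤ C / log μ ^ 2) :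
    0 ≤ C := by
  simpa using (abs_nonneg _).trans (hbound (exp (-1)) ⟨exp_pos _, exp_lt_one_iff.mpr (by norm_num)⟩)

lemma abs_exp_mul_mul_two_mul {x : ℝ} (hx : 0 ≤ x) :
    |exp (-t * x ^ 2) * h x * (2 * x)| = exp (-t * x ^ 2) * (|h x| * (2 * x)) := by
  rw [abs_mul, abs_mul, abs_exp, abs_of_nonneg (by linarith : 0 ≤ 2 * x), mul_assoc]

lemma IntervalIntegrable.abs_mul_two_mul {b : ℝ} (hb : 0 ≤ b)
    (hint : IntervalIntegrable (fun μ => exp (-t * μ ^ 2) * h μ * (2 * μ)) volume 0 b) :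
    IntervalIntegrable (fun μ => |h μ| * (2 * μ)) volume 0 b := by
  refine (hint.abs.continuousOn_mul (g := fun μ => exp (t * μ ^ 2)) (by fun_prop)).congr
    fun x hx => ?_
  rw [uIoc_of_le hb] at hx
  show exp (t * x ^ 2) * |exp (-t * x ^ 2) * h x * (2 * x)| = |h x| * (2 * x)
  rw [abs_exp_mul_mul_two_mul hx.1.le, ← mul_assoc, ← exp_add]
  simp

lemma mul_integral_abs_le_div_log_sq
    (hbound : ∀ μ ∈ Ioo (0 : ℝ) 1, |h μ| ≤ C / log μ ^ 2) (ht : 0 < t) (hs0 : 0 < s) (hs1 : s < 1)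
    (hint : IntervalIntegrable (fun μ => exp (-t * μ ^ 2) * h μ * (2 * μ)) volume 0 s) :
    t * ∫ μ in 0..s, |exp (-t * μ ^ 2) * h μ * (2 * μ)| ≤ C / log s ^ 2 := by
  have hC := nonneg_of_abs_le_div_log_sq hbound
  have hpoint : ∀ x ∈ Icc 0 s,
      |exp (-t * x ^ 2) * h x * (2 * x)| ≤ C / log s ^ 2 * (exp (-t * x ^ 2) * (2 * x)) := by
    rintro x ⟨hx0, hxs⟩
    rw [abs_exp_mul_mul_two_mul hx0, mul_left_comm]
    rcases hx0.eq_or_lt with rfl | hx0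
    · simp
    have hhx := (hbound x ⟨hx0, hxs.trans_lt hs1⟩).trans (div_log_sq_le_div_log_sq hC hx0 hxs hs1)
    gcongr
  calc t * ∫ μ in 0..s, |exp (-t * μ ^ 2) * h μ * (2 * μ)|
      ≤ t * ∫ μ in 0..s, C / log s ^ 2 * (exp (-t * μ ^ 2) * (2 * μ)) := by
        gcongr
        exact integral_mono_on hs0.le hint.abs
          (Continuous.intervalIntegrable (by fun_prop) _ _) hpoint
    _ ≤ t * (C / log s ^ 2 * (1 / t)) := by
        rw [intervalIntegral.integral_const_mul]
        gcongr
        exact integral_exp_neg_mul_sq_mul_two_mul_le ht s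
    _ = C / log s ^ 2 := by field_simp

lemma integral_abs_le_exp_mul (ht : 0 ≤ t) (hs0 : 0 ≤ s) (hs1 : s ≤ 1)
    (hint : IntervalIntegrable (fun μ => exp (-t * μ ^ 2) * h μ * (2 * μ)) volume s 1)
    (hg : IntervalIntegrable (fun μ => |h μ| * (2 * μ)) volume s 1) :
    ∫ μ in s..1, |exp (-t * μ ^ 2) * h μ * (2 * μ)| ≤
      exp (-t * s ^ 2) * ∫ μ in s..1, |h μ| * (2 * μ) := by
  rw [← intervalIntegral.integral_const_mul]
  refine integral_mono_on hs1 hint.abs (hg.const_mul _) fun x ⟨hsx, _⟩ => ?_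
  rw [abs_exp_mul_mul_two_mul (hs0.trans hsx)]
  have hg0 : 0 ≤ |h x| * (2 * x) := mul_nonneg (abs_nonneg _) (by linarith)
  have hexp : exp (-t * x ^ 2) ≤ exp (-t * s ^ 2) :=
    exp_le_exp.mpr (by nlinarith [mul_le_mul hsx hsx hs0 (hs0.trans hsx)])
  exact mul_le_mul_of_nonneg_right hexp hg0

lemma integral_abs_mul_two_mul_nonneg : 0 ≤ ∫ μ in 0..1, |h μ| * (2 * μ) :=
  integral_nonneg zero_le_one fun x hx => mul_nonneg (abs_nonneg _) (by linarith [hx.1])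

lemma abs_mul_integral_exp_neg_mul_sq_le
    (hbound : ∀ μ ∈ Ioo (0 : ℝ) 1, |h μ| ≤ C / log μ ^ 2) (ht : 0 < t) (hs0 : 0 < s) (hs1 : s < 1) :
    |t * ∫ μ in 0..1, exp (-t * μ ^ 2) * h μ * (2 * μ)| ≤
      C / log s ^ 2 + t * exp (-t * s ^ 2) * ∫ μ in 0..1, |h μ| * (2 * μ) := by
  have hM : 0 ≤ ∫ μ in 0..1, |h μ| * (2 * μ) := integral_abs_mul_two_mul_nonneg
  have hC := nonneg_of_abs_le_div_log_sq hbound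
  by_cases hint : IntervalIntegrable (fun μ => exp (-t * μ ^ 2) * h μ * (2 * μ)) volume 0 1
  swap
  · rw [integral_undef hint, mul_zero, abs_zero]
    positivity
  have hg := hint.abs_mul_two_mul zero_le_one
  have hsub : ∀ {f : ℝ → ℝ}, IntervalIntegrable f volume 0 1 →
      IntervalIntegrable f volume 0 s ∧ IntervalIntegrable f volume s 1 := fun hf =>
    ⟨hf.mono_set (by rw [uIcc_of_le hs0.le, uIcc_of_le zero_le_one]; gcongr),
      hf.mono_set (by rw [uIcc_of_le hs1.le, uIcc_of_le zero_le_one]; gcongr)⟩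
  have hgtail : ∫ μ in s..1, |h μ| * (2 * μ) ≤ ∫ μ in 0..1, |h μ| * (2 * μ) :=
    integral_mono_interval hs0.le hs1.le le_rfl
      (ae_restrict_of_forall_mem measurableSet_Ioc fun x hx =>
        mul_nonneg (abs_nonneg _) (by linarith [hx.1])) hg
  rw [abs_mul, abs_of_pos ht]
  calc t * |∫ μ in 0..1, exp (-t * μ ^ 2) * h μ * (2 * μ)|
      ≤ t * ∫ μ in 0..1, |exp (-t * μ ^ 2) * h μ * (2 * μ)| := by
        gcongr
        exact abs_integral_le_integral_abs zero_le_one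
    _ = t * (∫ μ in 0..s, |exp (-t * μ ^ 2) * h μ * (2 * μ)|) +
          t * ∫ μ in s..1, |exp (-t * μ ^ 2) * h μ * (2 * μ)| := by
        rw [← mul_add, integral_add_adjacent_intervals (hsub hint.abs).1 (hsub hint.abs).2]
    _ ≤ C / log s ^ 2 + t * (exp (-t * s ^ 2) * ∫ μ in 0..1, |h μ| * (2 * μ)) := by
        gcongr
        · exact mul_integral_abs_le_div_log_sq hbound ht hs0 hs1 (hsub hint).1
        · exact (integral_abs_le_exp_mul ht.le hs0.le hs1.le (hsub hint).2 (hsub hg).2).trans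
            (by gcongr)
    _ = _ := by ring

lemma mul_exp_neg_sqrt_le_div_log_sq (ht : 1 < t) : t * exp (-√t) ≤ 96 / log t ^ 2 := by
  have hx1 : 1 ≤ √t := one_le_sqrt.mpr ht.le
  have hlog : log t = 2 * log √t := by rw [log_sqrt (by linarith)]; ring
  have hsq : √t ^ 2 = t := sq_sqrt (by linarith)
  rw [le_div_iff₀ (pow_pos (log_pos ht) 2), exp_neg, hlog]
  set x := √t
  have hlogx : 0 ≤ log x := log_nonneg hx1
  have hlogx' : log x ≤ x := log_le_self (by linarith)
  have htaylor := pow_div_factorial_le_exp x (by linarith) 4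
  rw [show ((Nat.factorial 4 : ℕ) : ℝ) = 24 by norm_num [Nat.factorial]] at htaylor
  have := exp_pos x
  rw [← hsq]
  field_simp
  nlinarith [mul_le_mul hlogx' hlogx' hlogx (by linarith), sq_nonneg x]

theorem stmt4_general (h : ℝ → ℝ)
    (C : ℝ) (hbound : ∀ μ ∈ Set.Ioo (0 : ℝ) 1, |h μ| ≤ C / (Real.log μ) ^ 2) :
    ∃ C' : ℝ, ∀ t : ℝ, Real.exp 1 ≤ t →
      |t * ∫ μ in (0 : ℝ)..1, Real.exp (-t * μ ^ 2) * h μ * (2 * μ)| ≤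
        C' / (Real.log t) ^ 2 := by
  set M := ∫ μ in (0 : ℝ)..1, |h μ| * (2 * μ)
  have hM : 0 ≤ M := integral_abs_mul_two_mul_nonneg
  refine ⟨16 * C + 96 * M, fun t ht => ?_⟩
  have ht1 : 1 < t := (one_lt_exp_iff.mpr one_pos).trans_le ht
  have ht0 : 0 < t := one_pos.trans ht1
  set s := (√√t)⁻¹
  have hs1 : s < 1 := inv_lt_one_of_one_lt₀ (by simpa [lt_sqrt] using ht1)
  have hts : t * s ^ 2 = √t := by
    rw [inv_pow, sq_sqrt (sqrt_nonneg t), ← div_eq_mul_inv, div_sqrt]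
  have hlogs : log s ^ 2 = log t ^ 2 / 16 := by
    rw [log_inv, log_sqrt (sqrt_nonneg t), log_sqrt ht0.le]
    ring
  calc |t * ∫ μ in (0 : ℝ)..1, Real.exp (-t * μ ^ 2) * h μ * (2 * μ)|
      ≤ C / log s ^ 2 + t * exp (-t * s ^ 2) * M :=
        abs_mul_integral_exp_neg_mul_sq_le hbound ht0 (by positivity) hs1
    _ = 16 * C / log t ^ 2 + t * exp (-√t) * M := by
        rw [hlogs, neg_mul, hts]
        field_simp
    _ ≤ 16 * C / log t ^ 2 + 96 / log t ^ 2 * M := by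
        gcongr
        exact mul_exp_neg_sqrt_le_div_log_sq ht1
    _ = (16 * C + 96 * M) / log t ^ 2 := by ring

/-- Laplace-transform estimate: if `h` is measurable, supported in `(0,1]`, and
`|h(μ)| ≤ C/(ln μ)²` on `(0,1)`, then `|t ∫₀¹ e^{−tμ²} h(μ) 2μ dμ| ≤ C′/(ln t)²`
for all `t ≥ e`. -/
theorem stmt4 (h : ℝ → ℝ) (hmeas : Measurable h)
    (hsupp : ∀ μ : ℝ, μ ∉ Set.Ioc (0 : ℝ) 1 → h μ = 0)
    (C : ℝ) (hbound : ∀ μ ∈ Set.Ioo (0 : ℝ) 1, |h μ| ≤ C / (Real.log μ) ^ 2) :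
    ∃ C' : ℝ, ∀ t : ℝ, Real.exp 1 ≤ t →
      |t * ∫ μ in (0 : ℝ)..1, Real.exp (-t * μ ^ 2) * h μ * (2 * μ)| ≤
        C' / (Real.log t) ^ 2 :=
  stmt4_general h C hbound
end
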